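/- Price's theorem (one-dimensional case): if ℓ : R → R is twice differentiable with ℓ, ℓ', ℓ'' of at most polynomial growth, and q = N(m, σ²), then ∂/∂(σ²) E_{θ∼q}[ℓ(θ)] = ½ E_{θ∼q}[ℓ''(θ)]. -/

import Mathlib

open Real MeasureTheory

/-- `f` has at most polynomial growth. -/
def PolyGrowth (f : ℝ → ℝ) : Prop :=
  ∃ C : ℝ, ∃ n : ℕ, ∀ x : ℝ, |f x| ≤ C * (1 + |x|) ^ n

/-- Gaussian density with mean `m` and variance `v`. -/
noncomputable def gaussPDFVar (m v x : ℝ) : ℝ :=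
  (1 / Real.sqrt (2 * Real.pi * v)) * Real.exp (-(x - m) ^ 2 / (2 * v))

/-!
The Gaussian density solves the heat equation `∂_v G = ½ ∂²_x G`. Differentiating under the
integral sign (for `w` near `v` the `w`-derivative of `G` is dominated by a polynomial times the
density of variance `2v`) and integrating by parts twice moves the two `x`-derivatives onto `ℓ`;
boundary terms vanish because polynomials are integrable against Gaussians.
-/

open ProbabilityTheory

attribute [fun_prop] PolyGrowth

lemma abs_le_mul_one_add_abs_pow_of_le {a C x : ℝ} {n k : ℕ} (h : |a| ≤ C * (1 + |x|) ^ n)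
    (hnk : n ≤ k) : |a| ≤ C * (1 + |x|) ^ k := by
  have hx : 1 ≤ 1 + |x| := le_add_of_nonneg_right (abs_nonneg x)
  have hC : 0 ≤ C := nonneg_of_mul_nonneg_left ((abs_nonneg a).trans h) (by positivity)
  exact h.trans (mul_le_mul_of_nonneg_left (pow_le_pow_right₀ hx hnk) hC)

@[fun_prop]
lemma polyGrowth_const (c : ℝ) : PolyGrowth fun _ => c :=
  ⟨|c|, 0, fun x => by simp⟩

@[fun_prop]
lemma polyGrowth_id : PolyGrowth fun x => x :=
  ⟨1, 1, fun x => by simp⟩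

namespace PolyGrowth

variable {f g : ℝ → ℝ}

@[fun_prop]
lemma add (hf : PolyGrowth f) (hg : PolyGrowth g) : PolyGrowth fun x => f x + g x := by
  obtain ⟨C, n, hC⟩ := hf
  obtain ⟨D, k, hD⟩ := hg
  refine ⟨C + D, n + k, fun x => ?_⟩
  calc |f x + g x| ≤ |f x| + |g x| := abs_add_le _ _
    _ ≤ C * (1 + |x|) ^ (n + k) + D * (1 + |x|) ^ (n + k) :=
      add_le_add (abs_le_mul_one_add_abs_pow_of_le (hC x) (by omega))
        (abs_le_mul_one_add_abs_pow_of_le (hD x) (by omega))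
    _ = (C + D) * (1 + |x|) ^ (n + k) := by ring

@[fun_prop]
lemma mul (hf : PolyGrowth f) (hg : PolyGrowth g) : PolyGrowth fun x => f x * g x := by
  obtain ⟨C, n, hC⟩ := hf
  obtain ⟨D, k, hD⟩ := hg
  refine ⟨C * D, n + k, fun x => ?_⟩
  calc |f x * g x| = |f x| * |g x| := abs_mul _ _
    _ ≤ C * (1 + |x|) ^ n * (D * (1 + |x|) ^ k) :=
      mul_le_mul (hC x) (hD x) (abs_nonneg _) ((abs_nonneg _).trans (hC x))
    _ = C * D * (1 + |x|) ^ (n + k) := by ring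

@[fun_prop]
lemma abs (hf : PolyGrowth f) : PolyGrowth fun x => |f x| := by
  simpa only [PolyGrowth, abs_abs] using hf

@[fun_prop]
lemma neg (hf : PolyGrowth f) : PolyGrowth fun x => -f x := by
  simpa only [PolyGrowth, abs_neg] using hf

@[fun_prop]
lemma sub (hf : PolyGrowth f) (hg : PolyGrowth g) : PolyGrowth fun x => f x - g x := by
  simpa only [sub_eq_add_neg] using hf.add hg.neg

@[fun_prop]
lemma div_const (hf : PolyGrowth f) (c : ℝ) : PolyGrowth fun x => f x / c := by
  simpa only [div_eq_mul_inv] using hf.mul (polyGrowth_const c⁻¹)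

@[fun_prop]
lemma pow (hf : PolyGrowth f) (k : ℕ) : PolyGrowth fun x => f x ^ k := by
  induction k with
  | zero => simp only [pow_zero]; exact polyGrowth_const 1
  | succ k ih => simp only [pow_succ]; exact ih.mul hf

lemma integrable_gaussianReal (hf : PolyGrowth f) (hfm : AEStronglyMeasurable f volume)
    (m : ℝ) {v : NNReal} (hv : v ≠ 0) : Integrable f (gaussianReal m v) := by
  obtain ⟨C, n, hC⟩ := hf
  have hid : MemLp (fun x : ℝ => x) n (gaussianReal m v) :=
    memLp_id_gaussianReal' n (ENNReal.natCast_ne_top n)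
  have hmom : MemLp (fun x : ℝ => 1 + ‖x‖) n (gaussianReal m v) :=
    (memLp_const (1:ℝ)).add hid.norm
  refine Integrable.mono' (hmom.integrable_norm_pow'.const_mul C)
    (hfm.mono_ac (gaussianReal_absolutelyContinuous m hv)) (ae_of_all _ fun x => ?_)
  simpa [abs_of_nonneg (by positivity : (0:ℝ) ≤ 1 + |x|)] using hC x

end PolyGrowth

-- Both sides vanish when `v ≤ 0`.
lemma gaussPDFVar_eq_gaussianPDFReal (m v : ℝ) :
    gaussPDFVar m v = gaussianPDFReal m v.toNNReal := by
  ext x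
  rcases le_total 0 v with hv | hv
  · simp [gaussPDFVar, gaussianPDFReal, hv]
  · simp [gaussPDFVar, gaussianPDFReal, Real.toNNReal_of_nonpos hv,
      Real.sqrt_eq_zero'.2 (mul_nonpos_of_nonneg_of_nonpos (by positivity : (0:ℝ) ≤ 2 * π) hv)]

lemma gaussPDFVar_pos (m : ℝ) {v : ℝ} (hv : 0 < v) (x : ℝ) : 0 < gaussPDFVar m v x := by
  have : 0 < √(2 * π * v) := Real.sqrt_pos.2 (by positivity)
  unfold gaussPDFVar
  positivity

@[fun_prop]
lemma continuous_gaussPDFVar (m v : ℝ) : Continuous (gaussPDFVar m v) := by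
  unfold gaussPDFVar; fun_prop

lemma PolyGrowth.integrable_mul_gaussPDFVar {f : ℝ → ℝ} (hf : PolyGrowth f)
    (hfm : AEStronglyMeasurable f volume) (m : ℝ) {v : ℝ} (hv : 0 < v) :
    Integrable (fun x => f x * gaussPDFVar m v x) := by
  have hv' : v.toNNReal ≠ 0 := by simpa using hv
  have h := hf.integrable_gaussianReal hfm m hv'
  rw [gaussianReal_of_var_ne_zero _ hv', integrable_withDensity_iff_integrable_smul'
    (measurable_gaussianPDF _ _) (ae_of_all _ fun _ => gaussianPDF_lt_top)] at h
  simpa [toReal_gaussianPDF, gaussPDFVar_eq_gaussianPDFReal, mul_comm] using h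

lemma PolyGrowth.integrable_mul_mul_gaussPDFVar {f p : ℝ → ℝ} (hf : PolyGrowth f)
    (hfm : AEStronglyMeasurable f volume) (hp : PolyGrowth p)
    (hpm : AEStronglyMeasurable p volume) (m : ℝ) {v : ℝ} (hv : 0 < v) :
    Integrable (fun x => f x * (p x * gaussPDFVar m v x)) := by
  simpa only [mul_assoc] using (hf.mul hp).integrable_mul_gaussPDFVar (hfm.mul hpm) m hv

lemma gaussPDFVar_le_sqrt_mul {m w u : ℝ} (hw : 0 < w) (hwu : w ≤ u) (x : ℝ) :
    gaussPDFVar m w x ≤ √(u / w) * gaussPDFVar m u x := by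
  have hu : 0 < u := hw.trans_le hwu
  have hcoef : 1 / √(2 * π * w) = √(u / w) * (1 / √(2 * π * u)) := by
    rw [Real.sqrt_div hu.le, Real.sqrt_mul (by positivity) w, Real.sqrt_mul (by positivity) u]
    field_simp
  have hexp : rexp (-(x - m) ^ 2 / (2 * w)) ≤ rexp (-(x - m) ^ 2 / (2 * u)) := by
    rw [neg_div, neg_div]
    gcongr
  unfold gaussPDFVar
  rw [hcoef, mul_assoc]
  gcongr

lemma hasDerivAt_gaussPDFVar (m v x : ℝ) :
    HasDerivAt (gaussPDFVar m v) (-(x - m) / v * gaussPDFVar m v x) x :=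
  (((((hasDerivAt_id' x).sub_const m).pow 2).neg.div_const (2 * v)).exp.const_mul
    (1 / √(2 * π * v))).congr_deriv
      (by simp only [gaussPDFVar, Pi.neg_apply, Pi.pow_apply]; ring)

lemma hasDerivAt_mul_gaussPDFVar (m v x : ℝ) :
    HasDerivAt (fun y => -(y - m) / v * gaussPDFVar m v y)
      ((((x - m) / v) ^ 2 - 1 / v) * gaussPDFVar m v x) x :=
  ((((hasDerivAt_id' x).sub_const m).neg.div_const v).mul
    (hasDerivAt_gaussPDFVar m v x)).congr_deriv (by simp only [Pi.neg_apply]; ring)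

lemma hasDerivAt_gaussPDFVar_var (m x : ℝ) {w : ℝ} (hw : 0 < w) :
    HasDerivAt (fun w => gaussPDFVar m w x)
      ((((x - m) / w) ^ 2 - 1 / w) / 2 * gaussPDFVar m w x) w := by
  have hpos : 0 < 2 * π * w := by positivity
  have hsqrt := ((hasDerivAt_id' w).const_mul (2 * π)).sqrt hpos.ne'
  have hcoef := (hasDerivAt_const w (1 : ℝ)).div hsqrt (Real.sqrt_pos.2 hpos).ne'
  have hexp := ((hasDerivAt_const w (-(x - m) ^ 2)).div ((hasDerivAt_id' w).const_mul 2)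
    (by positivity)).exp
  refine (hcoef.mul hexp).congr_deriv ?_
  have hsq : √(2 * π * w) ^ 2 = 2 * π * w := Real.sq_sqrt hpos.le
  simp only [gaussPDFVar, Pi.div_apply]
  field_simp
  rw [hsq]
  ring

lemma abs_deriv_var_gaussPDFVar_le {m v w : ℝ} (hv : 0 < v) (hw : v / 2 < w) (hw' : w ≤ 2 * v)
    (x : ℝ) :
    |(((x - m) / w) ^ 2 - 1 / w) / 2 * gaussPDFVar m w x|
      ≤ (4 * ((x - m) / v) ^ 2 + 2 / v) * gaussPDFVar m (2 * v) x := by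
  have hw0 : 0 < w := by linarith
  have hfactor : |(((x - m) / w) ^ 2 - 1 / w) / 2| ≤ 2 * ((x - m) / v) ^ 2 + 1 / v := by
    have hsq : ((x - m) / w) ^ 2 ≤ 4 * ((x - m) / v) ^ 2 := by
      rw [div_pow, div_pow, ← mul_div_assoc, le_div_iff₀ (by positivity), div_mul_eq_mul_div,
        div_le_iff₀ (by positivity)]
      have hvw : v ^ 2 ≤ 4 * w ^ 2 := by nlinarith
      nlinarith [mul_le_mul_of_nonneg_left hvw (sq_nonneg (x - m))]
    have hinv : 1 / w ≤ 2 * (1 / v) := by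
      rw [← mul_div_assoc, mul_one, div_le_div_iff₀ hw0 hv]
      linarith
    rw [abs_div, abs_two, div_le_iff₀ two_pos]
    calc |((x - m) / w) ^ 2 - 1 / w| ≤ ((x - m) / w) ^ 2 + 1 / w := by
          rw [abs_le]; constructor <;> nlinarith [sq_nonneg ((x - m) / w), one_div_pos.2 hw0]
      _ ≤ (2 * ((x - m) / v) ^ 2 + 1 / v) * 2 := by linarith
  have hdensity : gaussPDFVar m w x ≤ 2 * gaussPDFVar m (2 * v) x := by
    refine (gaussPDFVar_le_sqrt_mul (u := 2 * v) hw0 (by linarith) x).trans ?_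
    gcongr
    · exact (gaussPDFVar_pos m (by positivity) x).le
    · rw [Real.sqrt_le_left (by norm_num), div_le_iff₀ hw0]
      linarith
  rw [abs_mul, abs_of_pos (gaussPDFVar_pos m hw0 x)]
  calc _ ≤ (2 * ((x - m) / v) ^ 2 + 1 / v) * (2 * gaussPDFVar m (2 * v) x) :=
        mul_le_mul hfactor hdensity (gaussPDFVar_pos m hw0 x).le (by positivity)
    _ = _ := by ring

lemma PolyGrowth.hasDerivAt_integral_mul_gaussPDFVar {f : ℝ → ℝ} (hf : PolyGrowth f)
    (hfm : AEStronglyMeasurable f volume) (m : ℝ) {v : ℝ} (hv : 0 < v) :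
    HasDerivAt (fun w => ∫ x, f x * gaussPDFVar m w x)
      (∫ x, f x * ((((x - m) / v) ^ 2 - 1 / v) / 2 * gaussPDFVar m v x)) v := by
  have hball : ∀ w ∈ Metric.ball v (v / 2), v / 2 < w ∧ w ≤ 2 * v := fun w hw => by
    rw [Metric.mem_ball, Real.dist_eq, abs_lt] at hw
    constructor <;> linarith
  have hbound : PolyGrowth fun x => |f x| * (4 * ((x - m) / v) ^ 2 + 2 / v) := by fun_prop
  refine (hasDerivAt_integral_of_dominated_loc_of_deriv_le
    (F := fun w x => f x * gaussPDFVar m w x)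
    (F' := fun w x => f x * ((((x - m) / w) ^ 2 - 1 / w) / 2 * gaussPDFVar m w x))
    (Metric.ball_mem_nhds v (half_pos hv))
    (.of_forall fun w => by fun_prop)
    (hf.integrable_mul_gaussPDFVar hfm m hv)
    (by fun_prop)
    (ae_of_all _ fun x w hw => ?_)
    (hbound.integrable_mul_gaussPDFVar (by fun_prop) m (by positivity : 0 < 2 * v))
    (ae_of_all _ fun x w hw => ?_)).2
  · obtain ⟨hw, hw'⟩ := hball w hw
    rw [Real.norm_eq_abs, abs_mul, mul_assoc]
    exact mul_le_mul_of_nonneg_left (abs_deriv_var_gaussPDFVar_le hv hw hw' x) (abs_nonneg _)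
  · exact (hasDerivAt_gaussPDFVar_var m x (by linarith [(hball w hw).1])).const_mul (f x)

lemma integral_mul_sq_sub_mul_gaussPDFVar {ℓ : ℝ → ℝ} (hℓ : Differentiable ℝ ℓ)
    (hℓ' : Differentiable ℝ (deriv ℓ)) (hg : PolyGrowth ℓ) (hg' : PolyGrowth (deriv ℓ))
    (hg'' : PolyGrowth (deriv (deriv ℓ))) (m : ℝ) {v : ℝ} (hv : 0 < v) :
    ∫ x, ℓ x * ((((x - m) / v) ^ 2 - 1 / v) * gaussPDFVar m v x)
      = ∫ x, deriv (deriv ℓ) x * gaussPDFVar m v x := by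
  have hm : AEStronglyMeasurable ℓ volume := hℓ.continuous.aestronglyMeasurable
  have hm' : AEStronglyMeasurable (deriv ℓ) volume := hℓ'.continuous.aestronglyMeasurable
  have hm'' : AEStronglyMeasurable (deriv (deriv ℓ)) volume :=
    (measurable_deriv _).aestronglyMeasurable
  have hp1 : PolyGrowth fun x => -(x - m) / v := by fun_prop
  have hp2 : PolyGrowth fun x => ((x - m) / v) ^ 2 - 1 / v := by fun_prop
  have hpm1 : AEStronglyMeasurable (fun x => -(x - m) / v) volume := by fun_prop
  have hpm2 : AEStronglyMeasurable (fun x => ((x - m) / v) ^ 2 - 1 / v) volume := by fun_prop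
  have hIBP₁ := integral_mul_deriv_eq_deriv_mul_of_integrable (fun x _ => (hℓ x).hasDerivAt)
    (fun x _ => hasDerivAt_mul_gaussPDFVar m v x)
    (hg.integrable_mul_mul_gaussPDFVar hm hp2 hpm2 m hv)
    (hg'.integrable_mul_mul_gaussPDFVar hm' hp1 hpm1 m hv)
    (hg.integrable_mul_mul_gaussPDFVar hm hp1 hpm1 m hv)
  have hIBP₂ := integral_mul_deriv_eq_deriv_mul_of_integrable (fun x _ => (hℓ' x).hasDerivAt)
    (fun x _ => hasDerivAt_gaussPDFVar m v x)
    (hg'.integrable_mul_mul_gaussPDFVar hm' hp1 hpm1 m hv)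
    (hg''.integrable_mul_gaussPDFVar hm'' m hv) (hg'.integrable_mul_gaussPDFVar hm' m hv)
  rw [hIBP₁, hIBP₂, neg_neg]

/-- Price's theorem (1D): if `ℓ` is twice differentiable with `ℓ, ℓ', ℓ''` of at most
polynomial growth and `q = N(m, σ²)`, then
`∂/∂(σ²) E_{θ∼q}[ℓ(θ)] = ½ E_{θ∼q}[ℓ''(θ)]`. -/
theorem stmt2 (ℓ : ℝ → ℝ) (hℓ : Differentiable ℝ ℓ) (hℓ' : Differentiable ℝ (deriv ℓ))
    (hg : PolyGrowth ℓ) (hg' : PolyGrowth (deriv ℓ)) (hg'' : PolyGrowth (deriv (deriv ℓ)))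
    (m v : ℝ) (hv : 0 < v) :
    HasDerivAt (fun v' : ℝ => ∫ θ : ℝ, ℓ θ * gaussPDFVar m v' θ)
      ((1 / 2) * ∫ θ : ℝ, deriv (deriv ℓ) θ * gaussPDFVar m v θ) v := by
  convert hg.hasDerivAt_integral_mul_gaussPDFVar hℓ.continuous.aestronglyMeasurable m hv using 1
  rw [← integral_mul_sq_sub_mul_gaussPDFVar hℓ hℓ' hg hg' hg'' m hv, ← integral_const_mul]
  congr 1 with x
  ring
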